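/- arXiv:2205.06751 — 5 statements merged into one kernel-verified Lean document; each statement's English description precedes it below -/
import Mathlib

section
/- Let n be a positive integer and let e_1, …, e_k be positive integers satisfying e_1² + e_2² + ⋯ + e_k² ≤ n. Then 2^{e_1} + 2^{e_2} + ⋯ + 2^{e_k} ≤ 2·max(2^{√n} + n − 1, 1 + 2√2·(n − 1)). -/
/-!
Since `x ↦ 2^x / x²` increases on `[3, ∞)`, every exponent with `e² ≤ n` satisfies
`2^e ≤ max 2 (2^√n / n) · e²` (the constant `2` covers `e = 1, 2`). Summing against
`∑ e_i² ≤ n` gives `∑ 2^{e_i} ≤ max (2n) (2^√n)`, which is at most `2 (2^√n + n − 1)`.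
-/

open Real Finset

theorem two_rpow_mul_sq_le_of_three_le {a b : ℝ} (ha : 3 ≤ a) (hab : a ≤ b) :
    (2 : ℝ) ^ a * b ^ 2 ≤ (2 : ℝ) ^ b * a ^ 2 := by
  have ha0 : 0 < a := by linarith
  have hb0 : 0 < b := by linarith
  -- `log (b / a) ≤ (b - a) / 3` and `2 / 3 < log 2`
  have hlog : 2 * (log b - log a) ≤ (b - a) * log 2 := by
    have hquot : log b - log a ≤ (b - a) / 3 := by
      rw [← log_div hb0.ne' ha0.ne']
      calc log (b / a) ≤ b / a - 1 := log_le_sub_one_of_pos (by positivity)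
        _ = (b - a) / a := by field_simp
        _ ≤ (b - a) / 3 := by gcongr
    nlinarith [log_two_gt_d9, sub_nonneg.mpr hab]
  rw [← log_le_log_iff (by positivity) (by positivity), log_mul (by positivity) (by positivity),
    log_mul (by positivity) (by positivity), log_rpow two_pos, log_rpow two_pos, log_pow, log_pow]
  push_cast
  linarith

theorem two_rpow_le_max_mul_sq {e : ℕ} (he : 0 < e) {x : ℝ} (hex : (e : ℝ) ≤ x) :
    (2 : ℝ) ^ (e : ℝ) ≤ max 2 ((2 : ℝ) ^ x / x ^ 2) * (e : ℝ) ^ 2 := by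
  rcases Nat.lt_or_ge e 3 with hsmall | hlarge
  · have h : (2 : ℝ) ^ (e : ℝ) ≤ 2 * (e : ℝ) ^ 2 := by
      rw [rpow_natCast]
      interval_cases e <;> norm_num
    exact h.trans (by gcongr; exact le_max_left _ _)
  · have he3 : (3 : ℝ) ≤ e := by exact_mod_cast hlarge
    have hx0 : 0 < x := by linarith
    have h : (2 : ℝ) ^ (e : ℝ) ≤ (2 : ℝ) ^ x / x ^ 2 * (e : ℝ) ^ 2 := by
      rw [div_mul_eq_mul_div, le_div_iff₀ (by positivity)]
      exact two_rpow_mul_sq_le_of_three_le he3 hex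
    exact h.trans (by gcongr; exact le_max_right _ _)

theorem sum_two_rpow_le_max {ι : Type*} (s : Finset ι) (e : ι → ℕ) (hpos : ∀ i ∈ s, 0 < e i)
    {x : ℝ} (hx : 0 < x) (hsum : ∑ i ∈ s, ((e i : ℝ)) ^ 2 ≤ x ^ 2) :
    ∑ i ∈ s, (2 : ℝ) ^ (e i : ℝ) ≤ max (2 * x ^ 2) ((2 : ℝ) ^ x) := by
  have hle : ∀ i ∈ s, (e i : ℝ) ≤ x := fun i hi =>
    abs_le_of_sq_le_sq' ((single_le_sum (fun j _ => sq_nonneg (e j : ℝ)) hi).trans hsum)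
      hx.le |>.2
  calc ∑ i ∈ s, (2 : ℝ) ^ (e i : ℝ)
      ≤ ∑ i ∈ s, max 2 ((2 : ℝ) ^ x / x ^ 2) * (e i : ℝ) ^ 2 :=
        sum_le_sum fun i hi => two_rpow_le_max_mul_sq (hpos i hi) (hle i hi)
    _ = max 2 ((2 : ℝ) ^ x / x ^ 2) * ∑ i ∈ s, (e i : ℝ) ^ 2 := (mul_sum _ _ _).symm
    _ ≤ max 2 ((2 : ℝ) ^ x / x ^ 2) * x ^ 2 := by gcongr
    _ = max (2 * x ^ 2) ((2 : ℝ) ^ x) := by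
        rw [max_mul_of_nonneg _ _ (by positivity), div_mul_cancel₀ _ (by positivity)]

/-- Numerical core of Corollary `exp`: positive integers `e_1, …, e_k` with
`∑ e_i² ≤ n` satisfy `∑ 2^{e_i} ≤ 2·max(2^{√n} + n − 1, 1 + 2√2·(n − 1))`. -/
theorem stmt_0 (n : ℕ) (hn : 0 < n) (k : ℕ) (e : Fin k → ℕ)
    (hpos : ∀ i, 0 < e i)
    (hsum : (∑ i, (e i) ^ 2) ≤ n) :
    (∑ i, (2 : ℝ) ^ (e i : ℝ)) ≤
      2 * max ((2 : ℝ) ^ Real.sqrt n + n - 1)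
              (1 + 2 * Real.sqrt 2 * ((n : ℝ) - 1)) := by
  have hn1 : (1 : ℝ) ≤ n := by exact_mod_cast hn
  have hsqrt : Real.sqrt n ^ 2 = n := sq_sqrt (by positivity)
  have hbound := sum_two_rpow_le_max univ e (fun i _ => hpos i) (sqrt_pos.2 (by positivity))
    (by rw [hsqrt]; exact_mod_cast hsum)
  have hpow : (1 : ℝ) ≤ (2 : ℝ) ^ Real.sqrt n := one_le_rpow one_le_two (sqrt_nonneg _)
  rw [hsqrt] at hbound
  calc (∑ i, (2 : ℝ) ^ (e i : ℝ)) ≤ max (2 * (n : ℝ)) ((2 : ℝ) ^ Real.sqrt n) := hbound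
    _ ≤ 2 * ((2 : ℝ) ^ Real.sqrt n + n - 1) := max_le (by linarith) (by linarith)
    _ ≤ _ := by gcongr; exact le_max_left _ _
end

section
/- Let n be a positive integer and let x_1, …, x_n be real numbers satisfying x_1² + x_2² + ⋯ + x_n² ≤ n. Then 2^{x_1} + 2^{x_2} + ⋯ + 2^{x_n} ≤ 2·max(2^{√n} + n − 1, 1 + 2√2·(n − 1)). -/
open Real Nat

lemma exp_series_tail (y : ℝ) : Real.exp y - 1 - y = ∑' n : ℕ, y ^ (n+2) / ((n+2)! : ℝ) := by
  have h : Real.exp y = ∑' n : ℕ, y ^ n / ((n)! : ℝ) := by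
    rw [Real.exp_eq_exp_ℝ, NormedSpace.exp_eq_tsum_div]
  have hs : Summable (fun n : ℕ => y ^ n / ((n)! : ℝ)) := Real.summable_pow_div_factorial y
  rw [h, Summable.tsum_eq_zero_add hs, Summable.tsum_eq_zero_add ((summable_nat_add_iff 1).2 hs)]
  simp

set_option maxHeartbeats 1000000 in
lemma lemA {u v : ℝ} (hu : 0 ≤ u) (huv : u ≤ v) :
    v^2 * (Real.exp u - 1 - u) ≤ u^2 * (Real.exp v - 1 - v) := by
  have hsu : Summable (fun n : ℕ => u ^ (n+2) / ((n+2)! : ℝ)) :=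
    (summable_nat_add_iff 2).2 (Real.summable_pow_div_factorial u)
  have hsv : Summable (fun n : ℕ => v ^ (n+2) / ((n+2)! : ℝ)) :=
    (summable_nat_add_iff 2).2 (Real.summable_pow_div_factorial v)
  rw [exp_series_tail, exp_series_tail, ← tsum_mul_left, ← tsum_mul_left]
  refine Summable.tsum_le_tsum (fun n => ?_) (Summable.mul_left _ hsu) (Summable.mul_left _ hsv)
  have hfac : (0:ℝ) < ((n+2)! : ℝ) := by positivity
  have key : v^2 * u^(n+2) ≤ u^2 * v^(n+2) := by
    have h1 : u^n ≤ v^n := pow_le_pow_left₀ hu huv n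
    calc v^2 * u^(n+2) = (u^2 * v^2) * u^n := by ring
    _ ≤ (u^2 * v^2) * v^n := mul_le_mul_of_nonneg_left h1 (by positivity)
    _ = u^2 * v^(n+2) := by ring
  calc v^2 * (u^(n+2)/((n+2)! : ℝ)) = (v^2 * u^(n+2))/((n+2)! : ℝ) := by ring
  _ ≤ (u^2 * v^(n+2))/((n+2)! : ℝ) := (div_le_div_iff_of_pos_right hfac).2 key
  _ = u^2 * (v^(n+2)/((n+2)! : ℝ)) := by ring

lemma lemKey {t s : ℝ} (ht : 0 ≤ t) (hts : t ≤ s) :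
    s^2 * ((2:ℝ)^t - 1 - t) ≤ t^2 * ((2:ℝ)^s - 1 - s) := by
  set L := Real.log 2 with hLdef
  have hL : 0 < L := Real.log_pos one_lt_two
  have hL1 : L ≤ 1 := by
    have := Real.log_two_lt_d9
    rw [hLdef]; linarith
  have hs : 0 ≤ s := ht.trans hts
  have hA := lemA (u := L * t) (v := L * s) (by positivity)
    (mul_le_mul_of_nonneg_left hts hL.le)
  have hB : s^2 * (Real.exp (L*t) - 1 - L*t) ≤ t^2 * (Real.exp (L*s) - 1 - L*s) := by
    have hL2 : (0:ℝ) < L^2 := by positivity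
    have hA2 : L^2 * (s^2 * (Real.exp (L*t) - 1 - L*t))
        ≤ L^2 * (t^2 * (Real.exp (L*s) - 1 - L*s)) := by linear_combination hA
    exact le_of_mul_le_mul_left hA2 hL2
  have h2t : (2:ℝ)^t = Real.exp (L * t) := Real.rpow_def_of_pos two_pos t
  have h2s : (2:ℝ)^s = Real.exp (L * s) := Real.rpow_def_of_pos two_pos s
  rw [h2t, h2s]
  have h3 : 0 ≤ (1 - L) * (s * t * (s - t)) := by
    apply mul_nonneg (by linarith)
    apply mul_nonneg (mul_nonneg hs ht) (by linarith)
  nlinarith [hB, h3]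

/-- Real-variable optimization bound from the proof of Corollary `exp`:
the maximum of `g(x) = ∑ 2^{x_i}` on the ball `{x : ∑ x_i² ≤ n}` is at most
`2·max(2^{√n} + n − 1, 1 + 2√2(n−1))`. -/
theorem stmt_1 (n : ℕ) (hn : 0 < n) (x : Fin n → ℝ)
    (hsum : (∑ i, (x i) ^ 2) ≤ (n : ℝ)) :
    (∑ i, (2 : ℝ) ^ (x i)) ≤
      2 * max ((2 : ℝ) ^ Real.sqrt n + n - 1)
              (1 + 2 * Real.sqrt 2 * ((n : ℝ) - 1)) := by
  set s := Real.sqrt n with hsdef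
  have hn1 : (1:ℝ) ≤ n := by exact_mod_cast hn
  have hn0 : (0:ℝ) < n := by linarith
  have hs1 : 1 ≤ s := by
    rw [hsdef]
    exact Real.one_le_sqrt.2 hn1
  have hs2 : s^2 = n := Real.sq_sqrt (by positivity)
  have hbeta : 0 ≤ (2:ℝ)^s - 1 - s := by
    have h := lemKey (t := 1) zero_le_one hs1
    rw [Real.rpow_one] at h
    nlinarith [h]
  set p : Fin n → ℝ := fun i => max (x i) 0 with hpdef
  have hp0 : ∀ i, 0 ≤ p i := fun i => le_max_right _ _
  have hpx : ∀ i, (p i)^2 ≤ (x i)^2 := by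
    intro i
    rcases le_or_gt (x i) 0 with h | h
    · have hp : p i = 0 := max_eq_right h
      rw [hp]
      simpa using sq_nonneg (x i)
    · have hp : p i = x i := max_eq_left h.le
      rw [hp]
  have hxin : ∀ i, (x i)^2 ≤ (n:ℝ) := by
    intro i
    have h := Finset.single_le_sum (f := fun i => (x i)^2)
      (fun j _ => sq_nonneg _) (Finset.mem_univ i)
    linarith
  have hps : ∀ i, p i ≤ s := by
    intro i
    nlinarith [hpx i, hxin i, hp0 i]
  have pointwise : ∀ i, (2:ℝ)^(x i) ≤ 1 + p i + (p i)^2 * ((2:ℝ)^s - 1 - s) / n := by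
    intro i
    have h1 : (2:ℝ)^(x i) ≤ (2:ℝ)^(p i) :=
      Real.rpow_le_rpow_of_exponent_le one_le_two (le_max_left _ _)
    have h2 := lemKey (hp0 i) (hps i)
    rw [hs2] at h2
    have h3 : (2:ℝ)^(p i) - 1 - p i ≤ (p i)^2 * ((2:ℝ)^s - 1 - s) / n := by
      rw [le_div_iff₀ hn0]
      nlinarith [h2]
    linarith
  have hsp2 : ∑ i, (p i)^2 ≤ (n:ℝ) :=
    le_trans (Finset.sum_le_sum (fun i _ => hpx i)) hsum
  have hsp2nn : 0 ≤ ∑ i, (p i)^2 :=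
    Finset.sum_nonneg (fun i _ => sq_nonneg _)
  have hspnn : 0 ≤ ∑ i, p i := Finset.sum_nonneg (fun i _ => hp0 i)
  have hsp : ∑ i, p i ≤ (n:ℝ) := by
    have CS := Finset.sum_mul_sq_le_sq_mul_sq Finset.univ (fun _ => (1:ℝ)) p
    simp only [one_pow, one_mul, Finset.sum_const, Finset.card_univ, Fintype.card_fin,
      nsmul_eq_mul, mul_one] at CS
    nlinarith [CS]
  have total : (∑ i, (2:ℝ)^(x i)) ≤ 2*n + ((2:ℝ)^s - 1 - s) := by
    calc (∑ i, (2:ℝ)^(x i)) ≤ ∑ i, (1 + p i + (p i)^2 * ((2:ℝ)^s - 1 - s) / n) :=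
          Finset.sum_le_sum (fun i _ => pointwise i)
    _ = (n:ℝ) + (∑ i, p i) + (∑ i, (p i)^2) * ((2:ℝ)^s - 1 - s) / n := by
        rw [Finset.sum_add_distrib, Finset.sum_add_distrib, ← Finset.sum_div,
          ← Finset.sum_mul]
        simp [Finset.card_univ]
    _ ≤ (n:ℝ) + (n:ℝ) + (n:ℝ) * ((2:ℝ)^s - 1 - s) / n := by
        have : (∑ i, (p i)^2) * ((2:ℝ)^s - 1 - s) ≤ (n:ℝ) * ((2:ℝ)^s - 1 - s) :=
          mul_le_mul_of_nonneg_right hsp2 hbeta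
        have hdiv := (div_le_div_iff_of_pos_right hn0).2 this
        linarith
    _ = 2*n + ((2:ℝ)^s - 1 - s) := by field_simp; ring
  have h2s : 0 < (2:ℝ)^s := Real.rpow_pos_of_pos two_pos s
  have final : 2*(n:ℝ) + ((2:ℝ)^s - 1 - s) ≤ 2 * ((2:ℝ)^s + n - 1) := by nlinarith
  calc (∑ i, (2:ℝ)^(x i)) ≤ 2 * ((2:ℝ)^s + n - 1) := total.trans final
  _ ≤ 2 * max ((2:ℝ)^s + n - 1) (1 + 2 * Real.sqrt 2 * ((n:ℝ) - 1)) := by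
      apply mul_le_mul_of_nonneg_left (le_max_left _ _) (by norm_num)
end

section
/- Let n be a positive integer and let a, b be real numbers with 0 < a < 1 < b and (n − 1)·a² + b² ≤ n. Then (n − 1)·2^a + 2^b ≤ 2·(n − 1 + 2^{√n}). -/
/-- Bound for maximizers of type (ii) (vectors `(a,…,a,b)`) in the proof of
Corollary `exp`. -/
theorem stmt_2 (n : ℕ) (hn : 0 < n) (a b : ℝ)
    (ha0 : 0 < a) (ha1 : a < 1) (hb : 1 < b)
    (hsum : ((n : ℝ) - 1) * a ^ 2 + b ^ 2 ≤ (n : ℝ)) :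
    ((n : ℝ) - 1) * (2 : ℝ) ^ a + (2 : ℝ) ^ b ≤
      2 * ((n : ℝ) - 1 + (2 : ℝ) ^ Real.sqrt n) := by
  have hn1 : (1 : ℝ) ≤ n := by exact_mod_cast hn
  have hb2 : b ^ 2 ≤ (n : ℝ) := by nlinarith
  have hbs : b ≤ Real.sqrt n := by
    nlinarith [Real.sq_sqrt (show (0:ℝ) ≤ n by linarith), Real.sqrt_nonneg (n:ℝ)]
  have h1 : (2 : ℝ) ^ a ≤ 2 := by
    calc (2 : ℝ) ^ a ≤ (2 : ℝ) ^ (1 : ℝ) :=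
          Real.rpow_le_rpow_of_exponent_le (by norm_num) ha1.le
    _ = 2 := Real.rpow_one 2
  have h2 : (2 : ℝ) ^ b ≤ (2 : ℝ) ^ Real.sqrt n :=
    Real.rpow_le_rpow_of_exponent_le (by norm_num) hbs
  have h3 : (0 : ℝ) ≤ (2 : ℝ) ^ Real.sqrt n := (Real.rpow_pos_of_pos (by norm_num) _).le
  nlinarith [Real.rpow_pos_of_pos (show (0:ℝ) < 2 by norm_num) a]
end

section
/- Let n be a natural number with n ≥ 3 and let a, b be real numbers with 0 < a < 1 < b and a² + (n − 1)·b² ≤ n. Then 2^a + (n − 1)·2^b < 2·(1 + 2√2·(n − 1)). -/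
/-- Bound for maximizers of type (iii) (vectors `(a,b,…,b)`) in the proof of
Corollary `exp`. -/
theorem stmt_3 (n : ℕ) (hn : 3 ≤ n) (a b : ℝ)
    (ha0 : 0 < a) (ha1 : a < 1) (hb : 1 < b)
    (hsum : a ^ 2 + ((n : ℝ) - 1) * b ^ 2 ≤ (n : ℝ)) :
    (2 : ℝ) ^ a + ((n : ℝ) - 1) * (2 : ℝ) ^ b <
      2 * (1 + 2 * Real.sqrt 2 * ((n : ℝ) - 1)) := by
  have hn' : (3 : ℝ) ≤ (n : ℝ) := by exact_mod_cast hn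
  have hpos : (0 : ℝ) < (n : ℝ) - 1 := by linarith
  have hb2 : b ^ 2 < 3 / 2 := by
    have h1 : ((n : ℝ) - 1) * b ^ 2 < (3 / 2) * ((n : ℝ) - 1) := by nlinarith
    have := (mul_lt_mul_iff_right₀ hpos).mp (by linarith [h1] : ((n : ℝ) - 1) * b ^ 2 < ((n : ℝ) - 1) * (3 / 2))
    linarith
  have hblt : b < 3 / 2 := by nlinarith
  have h2b : (2 : ℝ) ^ b < (2 : ℝ) ^ ((3 : ℝ) / 2) :=
    Real.rpow_lt_rpow_left_iff one_lt_two |>.mpr hblt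
  have hsq : (2 : ℝ) ^ ((3 : ℝ) / 2) = 2 * Real.sqrt 2 := by
    rw [show (3 : ℝ) / 2 = 1 + 1 / 2 by norm_num, Real.rpow_add two_pos, Real.rpow_one,
      Real.sqrt_eq_rpow]
  have h2a : (2 : ℝ) ^ a < 2 := by
    calc (2 : ℝ) ^ a < (2 : ℝ) ^ (1 : ℝ) := Real.rpow_lt_rpow_left_iff one_lt_two |>.mpr ha1
    _ = 2 := Real.rpow_one 2
  have hs2 : (0 : ℝ) < Real.sqrt 2 := Real.sqrt_pos.mpr two_pos
  have hmul : ((n : ℝ) - 1) * (2 : ℝ) ^ b < ((n : ℝ) - 1) * (2 * Real.sqrt 2) := by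
    apply mul_lt_mul_of_pos_left _ hpos
    rw [← hsq]; exact h2b
  nlinarith [mul_pos hpos hs2]
end

section
/- Let n be a positive integer and let y = (y_1, …, y_n) ∈ ℝ^n satisfy y_i ≥ 0 for all i and ∑ y_i² ≤ n. Then there exists x = (x_1, …, x_n) ∈ ℝ^n with ∑ x_i² ≤ n and ∑ 2^{y_i} ≤ ∑ 2^{x_i}, such that after a permutation of coordinates x has one of the following forms: (i) x = (a, a, …, a) with 0 ≤ a ≤ 1; (ii) x = (a, …, a, b) with 0 < a < 1 < b and 2^a/a = 2^b/b; (iii) x = (a, b, …, b) with 0 < a < 1 < b and 2^a/a = 2^b/b. -/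
/-!
Take a maximizer `x` of `∑ 2^{x_i}` on the (compact) ball. For any two coordinates, `(x_i, x_j)`
maximizes `2^u + 2^v` on the circle `u² + v² = x_i² + x_j²`, so the Lagrange condition
`φ(x_i) = φ(x_j)` holds for `φ(t) = 2^t / t`. Since `φ` decreases on `(0, 1/log 2]` and increases
afterwards, all coordinates below `1/log 2` coincide. Two coordinates above `1/log 2` are
impossible: `s ↦ 2^{√s}` is strictly convex for `√s ≥ 1/log 2`, so spreading their squares apart
would increase the sum. Comparing with `(1, …, 1)` gives a positive coordinate, and then the
Lagrange condition makes every coordinate positive.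
-/

open Real Finset Function Set Filter Topology

def IsMaxOnCircle (f : ℝ → ℝ) (p q : ℝ) : Prop :=
  ∀ u v : ℝ, u ^ 2 + v ^ 2 = p ^ 2 + q ^ 2 → f u + f v ≤ f p + f q

lemma IsMaxOnCircle.hasDerivAt_mul_eq_mul {f : ℝ → ℝ} {p q f'p f'q : ℝ} (h : IsMaxOnCircle f p q)
    (hq : 0 < q) (hfp : HasDerivAt f f'p p) (hfq : HasDerivAt f f'q q) :
    f'p * q = f'q * p := by
  set R := p ^ 2 + q ^ 2
  have hRp : √(R - p ^ 2) = q := by simp [R, hq.le]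
  have hloc : IsLocalMax (fun u => f u + f √(R - u ^ 2)) p := by
    have hnhds : ∀ᶠ u in 𝓝 p, u ^ 2 < R :=
      (continuous_pow 2).continuousAt.eventually_lt continuousAt_const (by simp [R]; positivity)
    filter_upwards [hnhds] with u hu
    rw [hRp]
    exact h u _ (by rw [sq_sqrt (by linarith)]; ring)
  have hderiv : HasDerivAt (fun u => f u + f √(R - u ^ 2))
      (f'p + f'q * (-(2 * p) / (2 * q))) p := by
    have hsqrt := ((hasDerivAt_pow 2 p).const_sub R).sqrt (by simp [R, hq.ne'])
    rw [hRp] at hsqrt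
    refine hfp.add ((hRp ▸ hfq).comp p ?_)
    simpa using hsqrt
  have := hloc.hasDerivAt_eq_zero hderiv
  field_simp at this
  linarith

section Maximizer

variable {ι : Type*} [Fintype ι]

lemma exists_isMaxOn_sum_of_continuous {f : ℝ → ℝ} (hf : Continuous f) {r : ℝ} (hr : 0 ≤ r) :
    ∃ x ∈ {z : ι → ℝ | ∑ k, z k ^ 2 ≤ r},
      IsMaxOn (fun z : ι → ℝ => ∑ k, f (z k)) {z | ∑ k, z k ^ 2 ≤ r} x := by
  have hclosed : IsClosed {z : ι → ℝ | ∑ k, z k ^ 2 ≤ r} :=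
    isClosed_le (continuous_finsetSum _ fun k _ => (continuous_apply k).pow 2) continuous_const
  have hbounded : Bornology.IsBounded {z : ι → ℝ | ∑ k, z k ^ 2 ≤ r} := by
    refine (Metric.isBounded_closedBall (x := 0) (r := √r)).subset fun z hz => ?_
    refine mem_closedBall_zero_iff.2 ((pi_norm_le_iff_of_nonneg (sqrt_nonneg r)).2 fun k => ?_)
    exact abs_le_sqrt ((single_le_sum (fun k _ => sq_nonneg (z k)) (mem_univ k)).trans hz)
  exact (Metric.isCompact_of_isClosed_isBounded hclosed hbounded).exists_isMaxOn ⟨0, by simpa using hr⟩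
    (continuous_finsetSum _ fun k _ => hf.comp (continuous_apply k)).continuousOn

variable [DecidableEq ι]

lemma sum_update_add (F : ℝ → ℝ) (x : ι → ℝ) (i : ι) (u : ℝ) :
    ∑ k, F (update x i u k) + F (x i) = ∑ k, F (x k) + F u := by
  rw [← add_sum_erase _ _ (mem_univ i), ← add_sum_erase _ (fun k => F (x k)) (mem_univ i),
    update_self, sum_congr rfl fun k hk => by rw [update_of_ne (ne_of_mem_erase hk)]]
  ring

lemma isMaxOnCircle_of_isMaxOn {f : ℝ → ℝ} {r : ℝ} {x : ι → ℝ} (hxr : ∑ k, x k ^ 2 ≤ r)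
    (hx : IsMaxOn (fun z : ι → ℝ => ∑ k, f (z k)) {z | ∑ k, z k ^ 2 ≤ r} x)
    {i j : ι} (hij : i ≠ j) : IsMaxOnCircle f (x i) (x j) := by
  intro u v huv
  have hz : ∀ F : ℝ → ℝ, ∑ k, F (update (update x i u) j v k) + F (x i) + F (x j) =
      ∑ k, F (x k) + F u + F v := by
    intro F
    have h₁ := sum_update_add F (update x i u) j v
    have h₂ := sum_update_add F x i u
    rw [update_of_ne hij.symm] at h₁
    linarith
  have hsq := hz (· ^ 2)
  have hval := hz f
  have := isMaxOn_iff.1 hx (update (update x i u) j v) (by simp only [mem_ofPred_eq]; linarith)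
  linarith

end Maximizer

section RpowDiv

variable {c : ℝ}

lemma hasDerivAt_rpow_div (hc : 0 < c) {t : ℝ} (ht : t ≠ 0) :
    HasDerivAt (fun t => c ^ t / t) (c ^ t * (log c * t - 1) / t ^ 2) t := by
  refine ((hasStrictDerivAt_const_rpow hc t).hasDerivAt.div (hasDerivAt_id' t) ht).congr_deriv ?_
  ring

lemma continuousOn_rpow_div (hc : 0 < c) {s : Set ℝ} (hs : ∀ t ∈ s, t ≠ 0) :
    ContinuousOn (fun t => c ^ t / t) s :=
  (continuous_const_rpow hc.ne').continuousOn.div continuousOn_id hs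

lemma strictAntiOn_rpow_div (hc : 1 < c) :
    StrictAntiOn (fun t => c ^ t / t) (Ioc 0 (log c)⁻¹) := by
  have hlog := log_pos hc
  refine strictAntiOn_of_deriv_neg (convex_Ioc _ _)
    (continuousOn_rpow_div (by linarith) fun t ht => ht.1.ne') fun t ht => ?_
  rw [interior_Ioc] at ht
  rw [(hasDerivAt_rpow_div (by linarith) ht.1.ne').deriv]
  have hlt : log c * t < 1 := by
    simpa [hlog.ne'] using mul_lt_mul_of_pos_left ht.2 hlog
  exact div_neg_of_neg_of_pos (mul_neg_of_pos_of_neg (by positivity) (by linarith))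
    (pow_pos ht.1 2)

lemma strictMonoOn_rpow_div (hc : 1 < c) :
    StrictMonoOn (fun t => c ^ t / t) (Ici (log c)⁻¹) := by
  have hlog := log_pos hc
  have hpos : ∀ t ∈ Ici (log c)⁻¹, 0 < t := fun t ht => lt_of_lt_of_le (by positivity) ht
  refine strictMonoOn_of_deriv_pos (convex_Ici _)
    (continuousOn_rpow_div (by linarith) fun t ht => (hpos t ht).ne') fun t ht => ?_
  rw [interior_Ici] at ht
  have ht0 := hpos t (mem_Ici.2 (le_of_lt ht))
  rw [(hasDerivAt_rpow_div (by linarith) ht0.ne').deriv]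
  have hlt : 1 < log c * t := by
    simpa [hlog.ne'] using mul_lt_mul_of_pos_left (show (log c)⁻¹ < t from ht) hlog
  exact div_pos (mul_pos (by positivity) (by linarith)) (by positivity)

/-- The derivative `(log c / 2) · c ^ √s / √s` increases with `s` because `t ↦ c ^ t / t` does. -/
lemma strictConvexOn_rpow_sqrt (hc : 1 < c) :
    StrictConvexOn ℝ (Ici ((log c)⁻¹ ^ 2)) (fun s => c ^ √s) := by
  have hlog := log_pos hc
  have hderiv : ∀ s, 0 < s → deriv (fun s => c ^ √s) s = log c / 2 * (c ^ √s / √s) := by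
    intro s hs
    refine ((hasStrictDerivAt_const_rpow (by linarith) √s).hasDerivAt.comp s
      (hasDerivAt_sqrt hs.ne')).deriv.trans ?_
    field_simp
  refine StrictMonoOn.strictConvexOn_of_deriv (convex_Ici _)
    ((continuous_const_rpow (by linarith)).comp continuous_sqrt).continuousOn ?_
  rw [interior_Ici]
  intro s hs s' hs' hss'
  have hsqrt : ∀ {s}, s ∈ Ioi ((log c)⁻¹ ^ 2) → √s ∈ Ici (log c)⁻¹ := fun hs =>
    (le_sqrt' (by positivity)).2 (le_of_lt hs)
  have hs0 : 0 < s := lt_of_le_of_lt (by positivity) hs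
  rw [hderiv s hs0, hderiv s' (hs0.trans hss')]
  exact mul_lt_mul_of_pos_left
    (strictMonoOn_rpow_div hc (hsqrt hs) (hsqrt hs') (sqrt_lt_sqrt hs0.le hss')) (by positivity)

lemma IsMaxOnCircle.rpow_mul_eq (hc : 1 < c) {p q : ℝ} (h : IsMaxOnCircle (c ^ ·) p q)
    (hq : 0 < q) : c ^ p * q = c ^ q * p := by
  have hc0 : 0 < c := by linarith
  have := h.hasDerivAt_mul_eq_mul hq (hasStrictDerivAt_const_rpow hc0 p).hasDerivAt
    (hasStrictDerivAt_const_rpow hc0 q).hasDerivAt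
  refine mul_right_cancel₀ (log_pos hc).ne' ?_
  linear_combination this

lemma IsMaxOnCircle.rpow_div_eq (hc : 1 < c) {p q : ℝ} (h : IsMaxOnCircle (c ^ ·) p q)
    (hp : 0 < p) (hq : 0 < q) : c ^ p / p = c ^ q / q := by
  rw [div_eq_div_iff hp.ne' hq.ne']
  exact h.rpow_mul_eq hc hq

lemma IsMaxOnCircle.rpow_le_or_le (hc : 1 < c) {p q : ℝ} (h : IsMaxOnCircle (c ^ ·) p q) :
    p ≤ (log c)⁻¹ ∨ q ≤ (log c)⁻¹ := by
  by_contra! ⟨hp, hq⟩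
  have ht : 0 < (log c)⁻¹ := inv_pos.2 (log_pos hc)
  obtain rfl : p = q := (strictMonoOn_rpow_div hc).injOn hp.le hq.le
    (h.rpow_div_eq hc (ht.trans hp) (ht.trans hq))
  set t := (log c)⁻¹
  have hle := h t √(2 * p ^ 2 - t ^ 2) (by rw [sq_sqrt (by nlinarith)]; ring)
  have hlt := (strictConvexOn_rpow_sqrt hc).2 (x := t ^ 2) (y := 2 * p ^ 2 - t ^ 2)
    self_mem_Ici (by rw [Set.mem_Ici]; nlinarith) (by nlinarith)
    (by norm_num : (0 : ℝ) < 1 / 2) (by norm_num : (0 : ℝ) < 1 / 2) (by norm_num)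
  have hmid : 1 / 2 * t ^ 2 + 1 / 2 * (2 * p ^ 2 - t ^ 2) = p ^ 2 := by ring
  simp only [smul_eq_mul, hmid, sqrt_sq ht.le, sqrt_sq (ht.trans hp).le] at hlt
  linarith

end RpowDiv

section Structure

variable {ι : Type*} [Fintype ι] [DecidableEq ι] {x : ι → ℝ}

lemma pos_of_isMaxOn_sum_rpow [Nonempty ι] {c : ℝ} (hc : 1 < c)
    (hxr : ∑ k, x k ^ 2 ≤ Fintype.card ι)
    (hx : IsMaxOn (fun z : ι → ℝ => ∑ k, c ^ z k) {z | ∑ k, z k ^ 2 ≤ Fintype.card ι} x)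
    (i : ι) : 0 < x i := by
  obtain ⟨j, hj⟩ : ∃ j, 0 < x j := by
    by_contra! h
    have h₁ : ∑ k, c ^ x k ≤ ∑ _k : ι, (1 : ℝ) :=
      sum_le_sum fun k _ => rpow_le_one_of_one_le_of_nonpos hc.le (h k)
    have h₂ : ∑ _k : ι, (1 : ℝ) < ∑ _k : ι, c ^ (1 : ℝ) :=
      sum_lt_sum_of_nonempty univ_nonempty fun k _ => by simpa using hc
    have h₃ := isMaxOn_iff.1 hx (fun _ => 1) (by simp)
    linarith
  rcases eq_or_ne i j with rfl | hij
  · exact hj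
  have := (isMaxOnCircle_of_isMaxOn hxr hx hij).rpow_mul_eq hc hj
  exact pos_of_mul_pos_right (this ▸ mul_pos (rpow_pos_of_pos (by linarith) _) hj)
    (rpow_pos_of_pos (by linarith) _).le

lemma exists_ne_sq_lt_one (hxr : ∑ k, x k ^ 2 ≤ Fintype.card ι) {j : ι} (hj : 1 < x j ^ 2) :
    ∃ k ≠ j, x k ^ 2 < 1 := by
  by_contra! h
  have : ∑ _k : ι, (1 : ℝ) < ∑ k, x k ^ 2 :=
    sum_lt_sum (fun k _ => if hk : k = j then hk ▸ hj.le else h k hk) ⟨j, mem_univ j, hj⟩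
  simp only [sum_const, card_univ, nsmul_eq_mul, mul_one] at this
  linarith

lemma isMaxOn_sum_two_rpow_cases [Nonempty ι] (hxr : ∑ k, x k ^ 2 ≤ Fintype.card ι)
    (hx : IsMaxOn (fun z : ι → ℝ => ∑ k, (2 : ℝ) ^ z k) {z | ∑ k, z k ^ 2 ≤ Fintype.card ι} x) :
    (∃ a : ℝ, 0 < a ∧ a ≤ 1 ∧ ∀ i, x i = a) ∨
      ∃ j a, 0 < a ∧ a < 1 ∧ 1 < x j ∧ (2 : ℝ) ^ a / a = (2 : ℝ) ^ x j / x j ∧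
        ∀ k ≠ j, x k = a := by
  have hpos := pos_of_isMaxOn_sum_rpow one_lt_two hxr hx
  have hcirc : ∀ i j, i ≠ j → IsMaxOnCircle ((2 : ℝ) ^ ·) (x i) (x j) :=
    fun i j => isMaxOnCircle_of_isMaxOn hxr hx
  have hφ : ∀ i j, (2 : ℝ) ^ x i / x i = (2 : ℝ) ^ x j / x j := by
    intro i j
    rcases eq_or_ne i j with rfl | hij
    · rfl
    · exact (hcirc i j hij).rpow_div_eq one_lt_two (hpos i) (hpos j)
  have heq : ∀ i j, x i ≤ (log 2)⁻¹ → x j ≤ (log 2)⁻¹ → x i = x j := fun i j hi hj =>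
    (strictAntiOn_rpow_div one_lt_two).injOn ⟨hpos i, hi⟩ ⟨hpos j, hj⟩ (hφ i j)
  by_cases hsmall : ∀ i, x i ≤ (log 2)⁻¹
  · obtain ⟨k, -, hk⟩ := exists_le_of_sum_le (f := fun k => x k ^ 2) (g := fun _ => 1)
      univ_nonempty (by simpa using hxr)
    exact Or.inl ⟨x k, hpos k, (sq_le_one_iff₀ (hpos k).le).1 hk,
      fun i => heq i k (hsmall i) (hsmall k)⟩
  obtain ⟨j, hj⟩ : ∃ j, (log 2)⁻¹ < x j := by simpa using hsmall
  have hj1 : 1 < x j := lt_trans ((one_lt_inv₀ (log_pos one_lt_two)).2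
    (log_two_lt_d9.trans (by norm_num))) hj
  have hothers : ∀ k ≠ j, x k ≤ (log 2)⁻¹ := fun k hk =>
    ((hcirc k j hk).rpow_le_or_le one_lt_two).resolve_right hj.not_ge
  obtain ⟨k, hkj, hk⟩ := exists_ne_sq_lt_one hxr (one_lt_pow₀ hj1 two_ne_zero)
  exact Or.inr ⟨j, x k, hpos k, (sq_lt_one_iff₀ (hpos k).le).1 hk, hj1, hφ k j,
    fun i hi => heq i k (hothers i hi) (hothers k hkj)⟩

end Structure

lemma exists_perm_apply_eq_ite_last {α : Type*} {n : ℕ} (x : Fin n → α) (j : Fin n) (a : α)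
    (h : ∀ k ≠ j, x k = a) :
    ∃ σ : Equiv.Perm (Fin n), ∀ i : Fin n, x (σ i) = if (i : ℕ) = n - 1 then x j else a := by
  have hlast : n - 1 < n := by have := j.isLt; omega
  refine ⟨Equiv.swap ⟨n - 1, hlast⟩ j, fun i => ?_⟩
  split_ifs with hi
  · rw [show i = ⟨n - 1, hlast⟩ from Fin.ext hi, Equiv.swap_apply_left]
  · refine h _ fun hij => hi ?_
    rw [Equiv.swap_apply_eq_iff, Equiv.swap_apply_right] at hij
    rw [hij]

theorem stmt_8_general (n : ℕ) (hn : 0 < n) (y : Fin n → ℝ)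
    (hy : (∑ i, (y i) ^ 2) ≤ (n : ℝ)) :
    ∃ x : Fin n → ℝ,
      (∑ i, (x i) ^ 2) ≤ (n : ℝ) ∧
      (∑ i, (2 : ℝ) ^ (y i)) ≤ (∑ i, (2 : ℝ) ^ (x i)) ∧
      ∃ σ : Equiv.Perm (Fin n),
        (∃ a : ℝ, 0 ≤ a ∧ a ≤ 1 ∧ ∀ i, x (σ i) = a) ∨
        (∃ a b : ℝ, 0 < a ∧ a < 1 ∧ 1 < b ∧
          (2 : ℝ) ^ a / a = (2 : ℝ) ^ b / b ∧
          ∀ i : Fin n, x (σ i) = if (i : ℕ) = n - 1 then b else a) ∨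
        (∃ a b : ℝ, 0 < a ∧ a < 1 ∧ 1 < b ∧
          (2 : ℝ) ^ a / a = (2 : ℝ) ^ b / b ∧
          ∀ i : Fin n, x (σ i) = if (i : ℕ) = 0 then a else b) := by
  have : Nonempty (Fin n) := Fin.pos_iff_nonempty.1 hn
  obtain ⟨x, hxr, hx⟩ := exists_isMaxOn_sum_of_continuous (ι := Fin n)
    (continuous_const_rpow two_ne_zero) (Nat.cast_nonneg (Fintype.card (Fin n)))
  have hdom := isMaxOn_iff.1 hx y (by simpa using hy)
  have hxn : ∑ i, x i ^ 2 ≤ n := by simpa using hxr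
  rcases isMaxOn_sum_two_rpow_cases hxr hx with ⟨a, ha0, ha1, hxa⟩ | ⟨j, a, ha0, ha1, hb, hab, hxa⟩
  · exact ⟨x, hxn, hdom, 1, Or.inl ⟨a, ha0.le, ha1, fun i => hxa _⟩⟩
  · obtain ⟨σ, hσ⟩ := exists_perm_apply_eq_ite_last x j a hxa
    exact ⟨x, hxn, hdom, σ, Or.inr (Or.inl ⟨a, x j, ha0, ha1, hb, hab, hσ⟩)⟩

/-- Structure of maximizers of `g(x) = ∑ 2^{x_i}` on the ball `∑ x_i² ≤ n`:
any nonnegative `y` in the ball is dominated by some `x` in the ball which,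
after a permutation of coordinates, has one of the forms
(i) `(a,…,a)` with `0 ≤ a ≤ 1`;
(ii) `(a,…,a,b)` with `0 < a < 1 < b` and `2^a/a = 2^b/b`;
(iii) `(a,b,…,b)` with `0 < a < 1 < b` and `2^a/a = 2^b/b`. -/
theorem stmt_8 (n : ℕ) (hn : 0 < n) (y : Fin n → ℝ)
    (hy0 : ∀ i, 0 ≤ y i) (hy : (∑ i, (y i) ^ 2) ≤ (n : ℝ)) :
    ∃ x : Fin n → ℝ,
      (∑ i, (x i) ^ 2) ≤ (n : ℝ) ∧
      (∑ i, (2 : ℝ) ^ (y i)) ≤ (∑ i, (2 : ℝ) ^ (x i)) ∧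
      ∃ σ : Equiv.Perm (Fin n),
        (∃ a : ℝ, 0 ≤ a ∧ a ≤ 1 ∧ ∀ i, x (σ i) = a) ∨
        (∃ a b : ℝ, 0 < a ∧ a < 1 ∧ 1 < b ∧
          (2 : ℝ) ^ a / a = (2 : ℝ) ^ b / b ∧
          ∀ i : Fin n, x (σ i) = if (i : ℕ) = n - 1 then b else a) ∨
        (∃ a b : ℝ, 0 < a ∧ a < 1 ∧ 1 < b ∧
          (2 : ℝ) ^ a / a = (2 : ℝ) ^ b / b ∧
          ∀ i : Fin n, x (σ i) = if (i : ℕ) = 0 then a else b) :=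
  stmt_8_general n hn y hy
end
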